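/- Let G be an α-critical graph containing a triangle {u,v,w} where deg(u) = deg(v) = deg(w) = 3, and suppose the third neighbors u', v', w' of u, v, w (outside the triangle) are pairwise distinct. Then {u', v', w'} is a stable set in G. -/

import Mathlib

open SimpleGraph

variable {V : Type*}

/-- The maximum size of an independent (stable) set of a simple graph. -/
noncomputable def alpha (G : SimpleGraph V) : ℕ :=
  sSup {n | ∃ s : Finset V, (∀ x ∈ s, ∀ y ∈ s, ¬ G.Adj x y) ∧ s.card = n}

/-- A graph is α-critical if deleting any edge increases α. -/
def AlphaCritical (G : SimpleGraph V) : Prop :=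
  ∀ x y : V, G.Adj x y → alpha G < alpha (G.deleteEdges {s(x, y)})

/-- `G` contains a totally odd K₄-subdivision: four distinct branch vertices joined by
six internally disjoint paths of odd length. -/
def HasTOK4 (G : SimpleGraph V) : Prop :=
  ∃ b : Fin 4 → V, Function.Injective b ∧
  ∃ P : ∀ i j : Fin 4, G.Walk (b i) (b j),
    (∀ i j, i ≠ j → (P i j).IsPath) ∧
    (∀ i j, i ≠ j → Odd (P i j).length) ∧
    (∀ i j k l : Fin 4, i ≠ j → k ≠ l → s(i, j) ≠ s(k, l) →
      ∀ v : V, v ∈ (P i j).support → v ∈ (P k l).support →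
        (v = b i ∨ v = b j) ∧ (v = b k ∨ v = b l))

/-- `G` is (isomorphic to) a totally odd K₄-subdivision: it has one that uses all
vertices and all edges of `G`. -/
def IsTOK4 (G : SimpleGraph V) : Prop :=
  ∃ b : Fin 4 → V, Function.Injective b ∧
  ∃ P : ∀ i j : Fin 4, G.Walk (b i) (b j),
    (∀ i j, i ≠ j → (P i j).IsPath) ∧
    (∀ i j, i ≠ j → Odd (P i j).length) ∧
    (∀ i j k l : Fin 4, i ≠ j → k ≠ l → s(i, j) ≠ s(k, l) →
      ∀ v : V, v ∈ (P i j).support → v ∈ (P k l).support →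
        (v = b i ∨ v = b j) ∧ (v = b k ∨ v = b l)) ∧
    (∀ v : V, ∃ i j, i ≠ j ∧ v ∈ (P i j).support) ∧
    (∀ e ∈ G.edgeSet, ∃ i j, i ≠ j ∧ e ∈ (P i j).edges)

/-- `G` is an odd cycle: a cycle of odd length passing through all vertices
and using all edges of `G`. -/
def IsOddCycle (G : SimpleGraph V) : Prop :=
  ∃ (v : V) (w : G.Walk v v), w.IsCycle ∧ Odd w.length ∧
    (∀ u : V, u ∈ w.support) ∧ (∀ e ∈ G.edgeSet, e ∈ w.edges)

/-- `G` is isomorphic to the complete graph on one vertex. -/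
def IsK1 (G : SimpleGraph V) : Prop := Nonempty (G ≃g (⊤ : SimpleGraph (Fin 1)))

/-- `G` is isomorphic to the complete graph on two vertices. -/
def IsK2 (G : SimpleGraph V) : Prop := Nonempty (G ≃g (⊤ : SimpleGraph (Fin 2)))

/-!
Suppose `u'v'` were an edge. Since `ww'` is α-critical, some stable set `S` of `G - ww'` has
`α(G) + 1` elements, and it must contain both `w` and `w'`. Then `T = S - w` is a maximum stable
set of `G` containing `w'`, in which `w'` is the only neighbour of `w`; so `u, v ∉ T`. A maximum
stable set dominates the graph, so `u` has a neighbour in `T`; as `N(u) = {v, w, u'}`, this is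
`u'`. Likewise `v' ∈ T`, contradicting the edge `u'v'`.
-/

open Finset

namespace SimpleGraph

variable {G : SimpleGraph V}

lemma alpha_eq_indepNum (G : SimpleGraph V) : alpha G = G.indepNum := by
  unfold alpha indepNum
  congr! 3 with n
  refine exists_congr fun s => ?_
  rw [isNIndepSet_iff, isIndepSet_iff]
  exact and_congr_left' ⟨fun h x hx y hy _ => h x hx y hy,
    fun h x hx y hy => (eq_or_ne x y).elim (fun e => e ▸ G.irrefl) (h hx hy)⟩

lemma neighborSet_eq_of_ncard_eq_three {a b c d : V} (h : (G.neighborSet a).ncard = 3)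
    (hb : G.Adj a b) (hc : G.Adj a c) (hd : G.Adj a d) (hbc : b ≠ c) (hbd : b ≠ d)
    (hcd : c ≠ d) : G.neighborSet a = {b, c, d} := by
  refine (Set.eq_of_subset_of_ncard_le ?_ ?_ (Set.finite_of_ncard_ne_zero (by omega))).symm
  · simp [Set.insert_subset_iff, hb, hc, hd]
  · rw [h, Set.ncard_eq_three.mpr ⟨b, c, d, hbc, hbd, hcd, rfl⟩]

lemma IsIndepSet.of_deleteEdges_of_notMem {s : Set V} {x y : V}
    (hs : (G.deleteEdges {s(x, y)}).IsIndepSet s) (hx : x ∉ s) : G.IsIndepSet s := by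
  intro p hp q hq hpq hadj
  refine hs hp hq hpq ((deleteEdges_adj ..).mpr ⟨hadj, ?_⟩)
  rw [Set.mem_singleton_iff, Sym2.eq_iff]
  rintro (⟨rfl, -⟩ | ⟨-, rfl⟩) <;> contradiction

lemma IsIndepSet.exists_adj_of_indepNum_le [Finite V] {T : Finset V} (hT : G.IsIndepSet T)
    (hcard : G.indepNum ≤ #T) {a : V} (ha : a ∉ T) : ∃ b ∈ T, G.Adj a b := by
  classical
  by_contra! hna
  have hins : G.IsIndepSet ↑(insert a T) := by
    rw [coe_insert]
    exact hT.insert fun b hb _ => ⟨hna b hb, fun h => hna b hb h.symm⟩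
  have := hins.card_le_indepNum
  rw [card_insert_of_notMem ha] at this
  omega

lemma AlphaCritical.exists_isIndepSet_of_adj [Finite V] (hG : AlphaCritical G) {x y : V}
    (hxy : G.Adj x y) : ∃ T : Finset V, G.IsIndepSet T ∧ G.indepNum ≤ #T ∧ y ∈ T ∧ x ∉ T ∧
      ∀ z ∈ T, G.Adj x z → z = y := by
  classical
  have hlt := hG x y hxy
  rw [alpha_eq_indepNum, alpha_eq_indepNum] at hlt
  obtain ⟨S, hS, hcard⟩ := (G.deleteEdges {s(x, y)}).exists_isNIndepSet_indepNum
  rw [← hcard] at hlt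
  have hxS : x ∈ S := by
    by_contra hx
    exact (hS.of_deleteEdges_of_notMem hx).card_le_indepNum.not_gt hlt
  have hyS : y ∈ S := by
    by_contra hy
    rw [Sym2.eq_swap] at hS
    exact (hS.of_deleteEdges_of_notMem hy).card_le_indepNum.not_gt hlt
  refine ⟨S.erase x, ?_, ?_, mem_erase.mpr ⟨hxy.ne.symm, hyS⟩, notMem_erase x S, ?_⟩
  · refine IsIndepSet.of_deleteEdges_of_notMem (y := y) ?_ (notMem_erase x S)
    exact hS.mono (by simp)
  · rw [card_erase_of_mem hxS]
    omega
  · intro z hz hxz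
    by_contra hzy
    refine hS hxS (mem_of_mem_erase hz) (ne_of_mem_erase hz).symm
      ((deleteEdges_adj ..).mpr ⟨hxz, ?_⟩)
    simp [hzy, hxy.ne]

theorem AlphaCritical.not_adj_of_neighborSet_subset [Finite V] (hG : AlphaCritical G)
    {a b c a' b' c' : V} (hac : G.Adj a c) (hbc : G.Adj b c) (hcc' : G.Adj c c')
    (hac' : a ≠ c') (hbc' : b ≠ c') (ha : G.neighborSet a ⊆ {b, c, a'})
    (hb : G.neighborSet b ⊆ {a, c, b'}) : ¬ G.Adj a' b' := by
  obtain ⟨T, hT, hcard, -, hcT, honly⟩ := hG.exists_isIndepSet_of_adj hcc'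
  have haT : a ∉ T := fun h => hac' (honly a h hac.symm)
  have hbT : b ∉ T := fun h => hbc' (honly b h hbc.symm)
  have third_mem : ∀ {p q r : V}, p ∉ T → q ∉ T → G.neighborSet p ⊆ {q, c, r} → r ∈ T := by
    intro p q r hp hq hN
    obtain ⟨z, hz, hpz⟩ := hT.exists_adj_of_indepNum_le hcard hp
    rcases hN hpz with rfl | rfl | rfl
    exacts [absurd hz hq, absurd hz hcT, hz]
  intro h
  exact hT (third_mem haT hbT ha) (third_mem hbT haT hb) h.ne h

end SimpleGraph

theorem stmt_18_general {V : Type*} [Fintype V] (G : SimpleGraph V) (hG : AlphaCritical G)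
    (u v w u' v' w' : V)
    (huv : G.Adj u v) (huw : G.Adj u w) (hvw : G.Adj v w)
    (hdu : (G.neighborSet u).ncard = 3) (hdv : (G.neighborSet v).ncard = 3)
    (hdw : (G.neighborSet w).ncard = 3)
    (hu' : G.Adj u u') (hu'T : u' ≠ v ∧ u' ≠ w)
    (hv' : G.Adj v v') (hv'T : v' ≠ u ∧ v' ≠ w)
    (hw' : G.Adj w w') (hw'T : w' ≠ u ∧ w' ≠ v) :
    ¬ G.Adj u' v' ∧ ¬ G.Adj u' w' ∧ ¬ G.Adj v' w' := by
  refine ⟨?_, ?_, ?_⟩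
  · exact hG.not_adj_of_neighborSet_subset huw hvw hw' hw'T.1.symm hw'T.2.symm
      (neighborSet_eq_of_ncard_eq_three hdu huv huw hu' hvw.ne hu'T.1.symm hu'T.2.symm).le
      (neighborSet_eq_of_ncard_eq_three hdv huv.symm hvw hv' huw.ne hv'T.1.symm hv'T.2.symm).le
  · exact hG.not_adj_of_neighborSet_subset huv hvw.symm hv' hv'T.1.symm hv'T.2.symm
      (neighborSet_eq_of_ncard_eq_three hdu huw huv hu' hvw.ne.symm hu'T.2.symm hu'T.1.symm).le
      (neighborSet_eq_of_ncard_eq_three hdw huw.symm hvw.symm hw' huv.ne hw'T.1.symm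
        hw'T.2.symm).le
  · exact hG.not_adj_of_neighborSet_subset huv.symm huw.symm hu' hu'T.1.symm hu'T.2.symm
      (neighborSet_eq_of_ncard_eq_three hdv hvw huv.symm hv' huw.ne.symm hv'T.2.symm
        hv'T.1.symm).le
      (neighborSet_eq_of_ncard_eq_three hdw hvw.symm huw.symm hw' huv.ne.symm hw'T.2.symm
        hw'T.1.symm).le

theorem stmt_18 {V : Type*} [Fintype V] (G : SimpleGraph V) (hG : AlphaCritical G)
    (u v w u' v' w' : V)
    (huv : G.Adj u v) (huw : G.Adj u w) (hvw : G.Adj v w)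
    (hdu : (G.neighborSet u).ncard = 3) (hdv : (G.neighborSet v).ncard = 3)
    (hdw : (G.neighborSet w).ncard = 3)
    (hu' : G.Adj u u') (hu'T : u' ≠ v ∧ u' ≠ w)
    (hv' : G.Adj v v') (hv'T : v' ≠ u ∧ v' ≠ w)
    (hw' : G.Adj w w') (hw'T : w' ≠ u ∧ w' ≠ v)
    (hdist : u' ≠ v' ∧ u' ≠ w' ∧ v' ≠ w') :
    ¬ G.Adj u' v' ∧ ¬ G.Adj u' w' ∧ ¬ G.Adj v' w' :=
  stmt_18_general G hG u v w u' v' w' huv huw hvw hdu hdv hdw hu' hu'T hv' hv'T hw' hw'T
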